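/- arXiv:2603.25191 — 3 statements merged into one kernel-verified Lean document; each statement's English description precedes it below -/
import Mathlib

section
/- For all integers k ≥ 1 and n ≥ 4, γ_{[k]R}(C_6 □ P_n) ≤ 6(n−2)·⌈(k+4)/5⌉ + 12·⌈(k+3−⌈(k+4)/5⌉)/3⌉, and moreover this quantity is at most (6nk + 54n + 4k − 4)/5 (equivalently, 5·γ_{[k]R}(C_6 □ P_n) ≤ 6nk + 54n + 4k − 4). -/
open scoped Classical

/-- The cylindrical grid `C_m □ P_n`: the Cartesian (box) product of the
cycle on `m` vertices with the path on `n` vertices. -/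
def cylinder (m n : ℕ) : SimpleGraph (Fin m × Fin n) :=
  (SimpleGraph.cycleGraph m).boxProd (SimpleGraph.pathGraph n)

/-- Sum of `f` over the closed neighborhood of `v`. -/
noncomputable def nbhdSum {V : Type*} [Fintype V] (G : SimpleGraph V) (f : V → ℕ) (v : V) : ℕ :=
  ∑ u ∈ Finset.univ.filter (fun u => G.Adj v u ∨ u = v), f u

/-- The number of active neighbors of `v`, i.e. neighbors with positive label. -/
noncomputable def anCard {V : Type*} [Fintype V] (G : SimpleGraph V) (f : V → ℕ) (v : V) : ℕ :=
  (Finset.univ.filter (fun u => G.Adj v u ∧ 0 < f u)).card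

/-- `f : V → {0,…,k+1}` is a `[k]`-Roman dominating function on `G`. -/
def IsKRDF {V : Type*} [Fintype V] (k : ℕ) (G : SimpleGraph V) (f : V → ℕ) : Prop :=
  (∀ v, f v ≤ k + 1) ∧ ∀ v, f v < k → k + anCard G f v ≤ nbhdSum G f v

/-- The `[k]`-Roman domination number: the minimum weight of a `[k]`-RDF. -/
noncomputable def gammaKR {V : Type*} [Fintype V] (k : ℕ) (G : SimpleGraph V) : ℕ :=
  sInf {w | ∃ f : V → ℕ, IsKRDF k G f ∧ w = ∑ v, f v}

/- ------------------ auxiliary machinery ------------------ -/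

private lemma fin6_facts : ∀ i : Fin 6,
    (i - (i - 1)) = 1 ∧ (i + 1) - i = 1 ∧ i - 1 ≠ i + 1 ∧ i - 1 ≠ i ∧ i + 1 ≠ i := by decide

private lemma cyl6_adj {n : ℕ} {v u : Fin 6 × Fin n} :
    (cylinder 6 n).Adj v u ↔
      ((v.1 - u.1 = 1 ∨ u.1 - v.1 = 1) ∧ v.2 = u.2) ∨
      ((v.2.val + 1 = u.2.val ∨ u.2.val + 1 = v.2.val) ∧ v.1 = u.1) := by
  simp only [cylinder, SimpleGraph.boxProd_adj, SimpleGraph.cycleGraph_adj (n := 4),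
    SimpleGraph.pathGraph_adj]

private lemma anCard_le_of_subset {V : Type*} [Fintype V] (G : SimpleGraph V) (f : V → ℕ)
    (v : V) (S : Finset V) (h : ∀ u, G.Adj v u → u ∈ S) : anCard G f v ≤ S.card := by
  unfold anCard
  exact Finset.card_le_card (fun u hu => h u (Finset.mem_filter.mp hu).2.1)

private lemma sum_le_nbhdSum {V : Type*} [Fintype V] (G : SimpleGraph V) (f : V → ℕ)
    (v : V) (T : Finset V) (h : ∀ u ∈ T, G.Adj v u ∨ u = v) : ∑ u ∈ T, f u ≤ nbhdSum G f v := by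
  unfold nbhdSum
  exact Finset.sum_le_sum_of_subset
    (fun u hu => Finset.mem_filter.mpr ⟨Finset.mem_univ u, h u hu⟩)

private lemma card4 {α : Type*} [DecidableEq α] (a b c d : α) :
    ({a, b, c, d} : Finset α).card ≤ 4 := by
  refine le_trans (Finset.card_insert_le _ _) (Nat.succ_le_succ ?_)
  refine le_trans (Finset.card_insert_le _ _) (Nat.succ_le_succ ?_)
  refine le_trans (Finset.card_insert_le _ _) (Nat.succ_le_succ ?_)
  simp

private lemma card3 {α : Type*} [DecidableEq α] (a b c : α) :
    ({a, b, c} : Finset α).card ≤ 3 := by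
  refine le_trans (Finset.card_insert_le _ _) (Nat.succ_le_succ ?_)
  refine le_trans (Finset.card_insert_le _ _) (Nat.succ_le_succ ?_)
  simp

private lemma pair_ne_left {n : ℕ} {x y : Fin 6} {j j' : Fin n} (h : x ≠ y) :
    (x, j) ≠ (y, j') := fun he => h (congrArg Prod.fst he)

private lemma pair_ne_right {n : ℕ} {x y : Fin 6} {j j' : Fin n} (h : j.val ≠ j'.val) :
    (x, j) ≠ (y, j') := fun he => h (congrArg (fun p : Fin 6 × Fin n => p.2.val) he)

private lemma adj_left {n : ℕ} (i : Fin 6) (j : Fin n) :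
    (cylinder 6 n).Adj (i, j) (i - 1, j) :=
  cyl6_adj.mpr (Or.inl ⟨Or.inl (fin6_facts i).1, rfl⟩)

private lemma adj_right {n : ℕ} (i : Fin 6) (j : Fin n) :
    (cylinder 6 n).Adj (i, j) (i + 1, j) :=
  cyl6_adj.mpr (Or.inl ⟨Or.inr (fin6_facts i).2.1, rfl⟩)

private lemma adj_path {n : ℕ} (i : Fin 6) {j j' : Fin n}
    (h : j.val + 1 = j'.val ∨ j'.val + 1 = j.val) :
    (cylinder 6 n).Adj (i, j) (i, j') :=
  cyl6_adj.mpr (Or.inr ⟨h, rfl⟩)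

/-- The key construction lemma: the column-based labeling is a `[k]`-RDF condition. -/
private lemma krdf_cond (k n a b : ℕ) (hn : 4 ≤ n) (ha1 : 1 ≤ a) (hb1 : 1 ≤ b)
    (h5a : k + 4 ≤ 5 * a) (h4ab : k + 4 ≤ 4 * a + b) (h3ba : k + 3 ≤ 3 * b + a)
    (v : Fin 6 × Fin n) :
    k + anCard (cylinder 6 n) (fun u => if u.2.val = 0 ∨ u.2.val = n - 1 then b else a) v
      ≤ nbhdSum (cylinder 6 n) (fun u => if u.2.val = 0 ∨ u.2.val = n - 1 then b else a) v := by
  set f : Fin 6 × Fin n → ℕ :=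
    (fun u => if u.2.val = 0 ∨ u.2.val = n - 1 then b else a) with hfdef
  obtain ⟨i, j⟩ := v
  obtain ⟨hi1, hi2, hi3, hi4, hi5⟩ := fin6_facts i
  have hjlt : j.val < n := j.isLt
  by_cases hj0 : j.val = 0
  · -- first column
    obtain ⟨jp, hjpv⟩ : ∃ jp : Fin n, jp.val = 1 := ⟨⟨1, by omega⟩, rfl⟩
    have hAN : anCard (cylinder 6 n) f (i, j) ≤ 3 := by
      refine le_trans (anCard_le_of_subset _ _ _ ({(i - 1, j), (i + 1, j), (i, jp)} : Finset _)
        ?_) (card3 _ _ _)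
      rintro ⟨u1, u2⟩ hadj
      rw [cyl6_adj] at hadj
      dsimp only at hadj
      simp only [Finset.mem_insert, Finset.mem_singleton]
      rcases hadj with ⟨h | h, he⟩ | ⟨hp, he⟩
      · have h1 : u1 = i - 1 := by rw [← h]; abel
        exact Or.inl (by rw [h1, ← he])
      · have h1 : u1 = i + 1 := by rw [← h]; abel
        exact Or.inr (Or.inl (by rw [h1, ← he]))
      · have h2 : u2 = jp := by
          rw [Fin.ext_iff, hjpv]
          have := u2.isLt
          omega
        exact Or.inr (Or.inr (by rw [h2, ← he]))
    have hsub : ∑ u ∈ ({(i, j), (i - 1, j), (i + 1, j), (i, jp)} : Finset _), f u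
        ≤ nbhdSum (cylinder 6 n) f (i, j) := by
      refine sum_le_nbhdSum _ _ _ _ ?_
      intro u hu
      simp only [Finset.mem_insert, Finset.mem_singleton] at hu
      rcases hu with rfl | rfl | rfl | rfl
      · exact Or.inr rfl
      · exact Or.inl (adj_left i j)
      · exact Or.inl (adj_right i j)
      · exact Or.inl (adj_path i (by omega))
    have hne1 : (i, j) ∉ ({(i - 1, j), (i + 1, j), (i, jp)} : Finset (Fin 6 × Fin n)) := by
      simp only [Finset.mem_insert, Finset.mem_singleton, not_or]
      exact ⟨pair_ne_left (fun h => hi4 h.symm), pair_ne_left (fun h => hi5 h.symm),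
        pair_ne_right (by omega)⟩
    have hne2 : (i - 1, j) ∉ ({(i + 1, j), (i, jp)} : Finset (Fin 6 × Fin n)) := by
      simp only [Finset.mem_insert, Finset.mem_singleton, not_or]
      exact ⟨pair_ne_left hi3, pair_ne_right (by omega)⟩
    have hne3 : (i + 1, j) ∉ ({(i, jp)} : Finset (Fin 6 × Fin n)) := by
      simp only [Finset.mem_singleton, not_or]
      exact pair_ne_right (by omega)
    rw [Finset.sum_insert hne1, Finset.sum_insert hne2, Finset.sum_insert hne3,
      Finset.sum_singleton] at hsub
    have v1 : f (i, j) = b := by simp only [hfdef]; rw [if_pos (Or.inl hj0)]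
    have v4 : f (i, jp) = a := by
      simp only [hfdef]
      rw [if_neg]
      rw [hjpv]
      omega
    rw [v1, v4] at hsub
    omega
  · by_cases hj1 : j.val = n - 1
    · -- last column
      obtain ⟨jm, hjmv⟩ : ∃ jm : Fin n, jm.val = n - 2 := ⟨⟨n - 2, by omega⟩, rfl⟩
      have hAN : anCard (cylinder 6 n) f (i, j) ≤ 3 := by
        refine le_trans (anCard_le_of_subset _ _ _ ({(i - 1, j), (i + 1, j), (i, jm)} : Finset _)
          ?_) (card3 _ _ _)
        rintro ⟨u1, u2⟩ hadj
        rw [cyl6_adj] at hadj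
        dsimp only at hadj
        simp only [Finset.mem_insert, Finset.mem_singleton]
        rcases hadj with ⟨h | h, he⟩ | ⟨hp, he⟩
        · have h1 : u1 = i - 1 := by rw [← h]; abel
          exact Or.inl (by rw [h1, ← he])
        · have h1 : u1 = i + 1 := by rw [← h]; abel
          exact Or.inr (Or.inl (by rw [h1, ← he]))
        · have h2 : u2 = jm := by
            rw [Fin.ext_iff, hjmv]
            have := u2.isLt
            omega
          exact Or.inr (Or.inr (by rw [h2, ← he]))
      have hsub : ∑ u ∈ ({(i, j), (i - 1, j), (i + 1, j), (i, jm)} : Finset _), f u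
          ≤ nbhdSum (cylinder 6 n) f (i, j) := by
        refine sum_le_nbhdSum _ _ _ _ ?_
        intro u hu
        simp only [Finset.mem_insert, Finset.mem_singleton] at hu
        rcases hu with rfl | rfl | rfl | rfl
        · exact Or.inr rfl
        · exact Or.inl (adj_left i j)
        · exact Or.inl (adj_right i j)
        · exact Or.inl (adj_path i (by omega))
      have hne1 : (i, j) ∉ ({(i - 1, j), (i + 1, j), (i, jm)} : Finset (Fin 6 × Fin n)) := by
        simp only [Finset.mem_insert, Finset.mem_singleton, not_or]
        exact ⟨pair_ne_left (fun h => hi4 h.symm), pair_ne_left (fun h => hi5 h.symm),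
          pair_ne_right (by omega)⟩
      have hne2 : (i - 1, j) ∉ ({(i + 1, j), (i, jm)} : Finset (Fin 6 × Fin n)) := by
        simp only [Finset.mem_insert, Finset.mem_singleton, not_or]
        exact ⟨pair_ne_left hi3, pair_ne_right (by omega)⟩
      have hne3 : (i + 1, j) ∉ ({(i, jm)} : Finset (Fin 6 × Fin n)) := by
        simp only [Finset.mem_singleton, not_or]
        exact pair_ne_right (by omega)
      rw [Finset.sum_insert hne1, Finset.sum_insert hne2, Finset.sum_insert hne3,
        Finset.sum_singleton] at hsub
      have v1 : f (i, j) = b := by simp only [hfdef]; rw [if_pos (Or.inr hj1)]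
      have v4 : f (i, jm) = a := by
        simp only [hfdef]
        rw [if_neg]
        rw [hjmv]
        omega
      rw [v1, v4] at hsub
      omega
    · -- middle column
      obtain ⟨jm, hjmv⟩ : ∃ jm : Fin n, jm.val = j.val - 1 := ⟨⟨j.val - 1, by omega⟩, rfl⟩
      obtain ⟨jp, hjpv⟩ : ∃ jp : Fin n, jp.val = j.val + 1 := ⟨⟨j.val + 1, by omega⟩, rfl⟩
      have hAN : anCard (cylinder 6 n) f (i, j) ≤ 4 := by
        refine le_trans (anCard_le_of_subset _ _ _
          (({(i - 1, j), (i + 1, j), (i, jm), (i, jp)}) : Finset _) ?_) (card4 _ _ _ _)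
        rintro ⟨u1, u2⟩ hadj
        rw [cyl6_adj] at hadj
        dsimp only at hadj
        simp only [Finset.mem_insert, Finset.mem_singleton]
        rcases hadj with ⟨h | h, he⟩ | ⟨hp, he⟩
        · have h1 : u1 = i - 1 := by rw [← h]; abel
          exact Or.inl (by rw [h1, ← he])
        · have h1 : u1 = i + 1 := by rw [← h]; abel
          exact Or.inr (Or.inl (by rw [h1, ← he]))
        · rcases hp with hp | hp
          · have h2 : u2 = jp := by rw [Fin.ext_iff, hjpv]; omega
            exact Or.inr (Or.inr (Or.inr (by rw [h2, ← he])))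
          · have h2 : u2 = jm := by rw [Fin.ext_iff, hjmv]; omega
            exact Or.inr (Or.inr (Or.inl (by rw [h2, ← he])))
      have hsub : ∑ u ∈ ({(i, j), (i - 1, j), (i + 1, j), (i, jm), (i, jp)} : Finset _), f u
          ≤ nbhdSum (cylinder 6 n) f (i, j) := by
        refine sum_le_nbhdSum _ _ _ _ ?_
        intro u hu
        simp only [Finset.mem_insert, Finset.mem_singleton] at hu
        rcases hu with rfl | rfl | rfl | rfl | rfl
        · exact Or.inr rfl
        · exact Or.inl (adj_left i j)
        · exact Or.inl (adj_right i j)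
        · exact Or.inl (adj_path i (by omega))
        · exact Or.inl (adj_path i (by omega))
      have hne1 : (i, j) ∉ ({(i - 1, j), (i + 1, j), (i, jm), (i, jp)} :
          Finset (Fin 6 × Fin n)) := by
        simp only [Finset.mem_insert, Finset.mem_singleton, not_or]
        exact ⟨pair_ne_left (fun h => hi4 h.symm), pair_ne_left (fun h => hi5 h.symm),
          pair_ne_right (by omega), pair_ne_right (by omega)⟩
      have hne2 : (i - 1, j) ∉ ({(i + 1, j), (i, jm), (i, jp)} : Finset (Fin 6 × Fin n)) := by
        simp only [Finset.mem_insert, Finset.mem_singleton, not_or]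
        exact ⟨pair_ne_left hi3, pair_ne_right (by omega), pair_ne_right (by omega)⟩
      have hne3 : (i + 1, j) ∉ ({(i, jm), (i, jp)} : Finset (Fin 6 × Fin n)) := by
        simp only [Finset.mem_insert, Finset.mem_singleton, not_or]
        exact ⟨pair_ne_right (by omega), pair_ne_right (by omega)⟩
      have hne4 : (i, jm) ∉ ({(i, jp)} : Finset (Fin 6 × Fin n)) := by
        simp only [Finset.mem_singleton]
        exact pair_ne_right (by omega)
      rw [Finset.sum_insert hne1, Finset.sum_insert hne2, Finset.sum_insert hne3,
        Finset.sum_insert hne4, Finset.sum_singleton] at hsub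
      have hval : k + 4 ≤ f (i, j) + (f (i - 1, j) + (f (i + 1, j) + (f (i, jm) + f (i, jp)))) := by
        simp only [hfdef]
        rw [hjmv, hjpv]
        split_ifs <;> omega
      omega

private lemma sum_f (n a b : ℕ) (hn : 4 ≤ n) :
    (∑ v : Fin 6 × Fin n, if v.2.val = 0 ∨ v.2.val = n - 1 then b else a)
      = 6 * (n - 2) * a + 12 * b := by
  rw [Fintype.sum_prod_type]
  have hc1 : (Finset.univ.filter (fun j : Fin n => j.val = 0 ∨ j.val = n - 1)).card = 2 := by
    have h2 : (Finset.univ.filter (fun j : Fin n => j.val = 0 ∨ j.val = n - 1)) =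
        ({⟨0, by omega⟩, ⟨n - 1, by omega⟩} : Finset (Fin n)) := by
      ext j
      simp [Fin.ext_iff]
    rw [h2, Finset.card_insert_of_notMem (by simp [Fin.ext_iff]; omega),
      Finset.card_singleton]
  have hc2 : (Finset.univ.filter (fun j : Fin n => ¬(j.val = 0 ∨ j.val = n - 1))).card
      = n - 2 := by
    have h := Finset.card_filter_add_card_filter_not
      (s := (Finset.univ : Finset (Fin n))) (p := fun j : Fin n => j.val = 0 ∨ j.val = n - 1)
    rw [Finset.card_univ, Fintype.card_fin, hc1] at h
    omega
  have hinner : (∑ j : Fin n, if j.val = 0 ∨ j.val = n - 1 then b else a)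
      = 2 * b + (n - 2) * a := by
    rw [Finset.sum_ite, Finset.sum_const, Finset.sum_const, hc1, hc2, smul_eq_mul, smul_eq_mul]
  dsimp only
  simp only [hinner]
  rw [Finset.sum_const, Finset.card_univ, Fintype.card_fin, smul_eq_mul]
  ring

theorem stmt8 (k n : ℕ) (hk : 1 ≤ k) (hn : 4 ≤ n) :
    gammaKR k (cylinder 6 n) ≤ 6 * (n - 2) * ((k + 4) ⌈/⌉ 5) + 12 * ((k + 3 - ((k + 4) ⌈/⌉ 5)) ⌈/⌉ 3) ∧
    5 * (6 * (n - 2) * ((k + 4) ⌈/⌉ 5) + 12 * ((k + 3 - ((k + 4) ⌈/⌉ 5)) ⌈/⌉ 3)) ≤ 6 * n * k + 54 * n + 4 * k - 4 := by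
  have hadiv : (k + 4) ⌈/⌉ 5 = (k + 8) / 5 := by
    rw [Nat.ceilDiv_eq_add_pred_div]
    congr 1
  set a := (k + 4) ⌈/⌉ 5 with hadef
  have h5 := Nat.div_add_mod (k + 8) 5
  have h5m : (k + 8) % 5 < 5 := Nat.mod_lt _ (by norm_num)
  have ha' : 5 * a + (k + 8) % 5 = k + 8 := by rw [hadiv]; exact h5
  have hak : a ≤ k := by omega
  have ha1 : 1 ≤ a := by omega
  have h5a : k + 4 ≤ 5 * a := by omega
  have hbdiv : (k + 3 - a) ⌈/⌉ 3 = (k + 5 - a) / 3 := by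
    rw [Nat.ceilDiv_eq_add_pred_div]
    congr 1
    omega
  set b := (k + 3 - a) ⌈/⌉ 3 with hbdef
  have h3 := Nat.div_add_mod (k + 5 - a) 3
  have h3m : (k + 5 - a) % 3 < 3 := Nat.mod_lt _ (by norm_num)
  have hb' : 3 * b + (k + 5 - a) % 3 = k + 5 - a := by rw [hbdiv]; exact h3
  have hb1 : 1 ≤ b := by omega
  have hbk : b ≤ k + 1 := by omega
  have h3ba : k + 3 ≤ 3 * b + a := by omega
  have h4ab : k + 4 ≤ 4 * a + b := by omega
  constructor
  · unfold gammaKR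
    apply Nat.sInf_le
    refine ⟨fun u => if u.2.val = 0 ∨ u.2.val = n - 1 then b else a, ⟨?_, ?_⟩,
      (sum_f n a b hn).symm⟩
    · intro v
      dsimp only
      split_ifs
      · exact hbk
      · omega
    · intro v _
      exact krdf_cond k n a b hn ha1 hb1 h5a h4ab h3ba v
  · obtain ⟨m, rfl⟩ : ∃ m, n = m + 2 := ⟨n - 2, by omega⟩
    have hm : 2 ≤ m := by omega
    have h60 : 60 * b ≤ 16 * k + 84 := by omega
    have h30 : 30 * a ≤ 6 * k + 48 := by omega
    have h4Y : 4 ≤ 6 * (m + 2) * k + 54 * (m + 2) + 4 * k := by nlinarith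
    rw [Nat.add_sub_cancel, Nat.le_sub_iff_add_le h4Y]
    have key : m * (30 * a) ≤ m * (6 * k + 48) := Nat.mul_le_mul_left m h30
    nlinarith [key]
end

section
/- For every integer n ≥ 1, the packing number of C_6 □ P_n equals n if n is even and n+1 if n is odd; equivalently, ρ(C_6 □ P_n) = 2⌈n/2⌉. -/
open scoped Classical

/-- `D` is a packing: closed neighborhoods of distinct vertices of `D` are disjoint. -/
def IsPacking {V : Type*} (G : SimpleGraph V) (D : Finset V) : Prop :=
  ∀ u ∈ D, ∀ v ∈ D, u ≠ v → ∀ w, ¬((G.Adj u w ∨ u = w) ∧ (G.Adj v w ∨ v = w))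

/-- The packing number of `G`: the maximum cardinality of a packing. -/
noncomputable def packingNumber {V : Type*} [Fintype V] (G : SimpleGraph V) : ℕ :=
  sSup {c | ∃ D : Finset V, IsPacking G D ∧ c = D.card}

/-! ### Auxiliary distance on the cycle `C₆` -/

/-- Cyclic distance on `Fin 6`. -/
def cdist (a b : Fin 6) : ℕ := min (Nat.dist a.val b.val) (6 - Nat.dist a.val b.val)

lemma cdist_tri : ∀ a b c : Fin 6, cdist a b ≤ cdist a c + cdist c b := by decide
lemma cdist_comm : ∀ a b : Fin 6, cdist a b = cdist b a := by decide
lemma cdist_eq_zero : ∀ a b : Fin 6, cdist a b = 0 → a = b := by decide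
lemma cdist_self : ∀ a : Fin 6, cdist a a = 0 := by decide
lemma cdist_one : ∀ a b : Fin 6, cdist a b = 1 → (a - b).val = 1 ∨ (b - a).val = 1 := by decide
lemma cdist_of_adj : ∀ a b : Fin 6, ((a - b).val = 1 ∨ (b - a).val = 1) → cdist a b = 1 := by
  decide
lemma cdist_two : ∀ a b : Fin 6, cdist a b = 2 →
    ∃ c : Fin 6, ((a - c).val = 1 ∨ (c - a).val = 1) ∧ ((c - b).val = 1 ∨ (b - c).val = 1) := by
  decide
lemma cdist_three : ∀ a b c : Fin 6, 3 ≤ cdist a b → 2 ≤ cdist a c → 2 ≤ cdist b c → False := by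
  decide

/-- The "grid distance" proxy: cyclic distance plus path distance. -/
def vdist {n : ℕ} (u v : Fin 6 × Fin n) : ℕ := cdist u.1 v.1 + Nat.dist u.2.val v.2.val

lemma adj_iff {n : ℕ} {u v : Fin 6 × Fin n} :
    (cylinder 6 n).Adj u v ↔
      ((u.1 - v.1).val = 1 ∨ (v.1 - u.1).val = 1) ∧ u.2 = v.2 ∨
      (u.2.val + 1 = v.2.val ∨ v.2.val + 1 = u.2.val) ∧ u.1 = v.1 := by
  simp only [cylinder, SimpleGraph.boxProd_adj, SimpleGraph.cycleGraph_adj',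
    SimpleGraph.pathGraph_adj]

lemma vdist_le_one_of_closed {n : ℕ} {u w : Fin 6 × Fin n}
    (h : (cylinder 6 n).Adj u w ∨ u = w) : vdist u w ≤ 1 := by
  rcases h with h | rfl
  · rcases adj_iff.mp h with ⟨h1, h2⟩ | ⟨h1, h2⟩
    · have := cdist_of_adj u.1 w.1 h1
      unfold vdist
      rw [h2]
      simp [this, Nat.dist_self]
    · unfold vdist
      rw [h2]
      have : Nat.dist u.2.val w.2.val ≤ 1 := by simp [Nat.dist]; omega
      simp [cdist_self, this]
  · unfold vdist; simp [cdist_self, Nat.dist_self]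

/-- No common closed neighbour when the distance proxy is at least 3. -/
lemma no_common_of_dist {n : ℕ} {u v : Fin 6 × Fin n} (h : 3 ≤ vdist u v) (w : Fin 6 × Fin n) :
    ¬(((cylinder 6 n).Adj u w ∨ u = w) ∧ ((cylinder 6 n).Adj v w ∨ v = w)) := by
  rintro ⟨h1, h2⟩
  have d1 := vdist_le_one_of_closed h1
  have d2 := vdist_le_one_of_closed h2
  unfold vdist at h d1 d2
  have t1 := cdist_tri u.1 v.1 w.1
  have t2 := Nat.dist.triangle_inequality u.2.val w.2.val v.2.val
  have c1 := cdist_comm w.1 v.1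
  have n1 := Nat.dist_comm w.2.val v.2.val
  omega

/-- Members of a packing are at distance at least 3 apart. -/
lemma packing_dist {n : ℕ} {D : Finset (Fin 6 × Fin n)} (hD : IsPacking (cylinder 6 n) D)
    {u v : Fin 6 × Fin n} (hu : u ∈ D) (hv : v ∈ D) (huv : u ≠ v) : 3 ≤ vdist u v := by
  by_contra h
  push_neg at h
  have hkey := hD u hu v hv huv
  unfold vdist at h
  set c := cdist u.1 v.1 with hc
  set p := Nat.dist u.2.val v.2.val with hp
  have hc3 : c + p ≤ 2 := by omega
  -- case analysis on p
  rcases Nat.lt_or_ge p 1 with hp0 | hp1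
  · -- p = 0 : same column
    have hcol : u.2 = v.2 := Fin.ext (Nat.eq_of_dist_eq_zero (by omega))
    rcases Nat.lt_or_ge c 2 with hcl | hcg
    · -- c ≤ 1: u and v adjacent or equal
      have hc1 : c = 1 := by
        rcases Nat.lt_or_ge c 1 with h0 | h1
        · exact absurd (Prod.ext (cdist_eq_zero _ _ (by omega)) hcol) huv
        · omega
      have hadj : (cylinder 6 n).Adj u v := adj_iff.mpr (Or.inl ⟨cdist_one _ _ hc1, hcol⟩)
      exact hkey v ⟨Or.inl hadj, Or.inr rfl⟩
    · -- c = 2: midpoint on the cycle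
      have hc2 : c = 2 := by omega
      obtain ⟨m, hm1, hm2⟩ := cdist_two u.1 v.1 hc2
      refine hkey (m, u.2) ⟨Or.inl ?_, Or.inl ?_⟩
      · exact adj_iff.mpr (Or.inl ⟨hm1, rfl⟩)
      · refine adj_iff.mpr (Or.inl ⟨?_, hcol.symm⟩)
        rcases hm2 with h | h
        · exact Or.inr h
        · exact Or.inl h
  · rcases Nat.lt_or_ge p 2 with hpl | hpg
    · -- p = 1
      have hp1' : p = 1 := by omega
      have hpath : u.2.val + 1 = v.2.val ∨ v.2.val + 1 = u.2.val := by
        have := hp1'; rw [hp] at this; simp [Nat.dist] at this; omega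
      rcases Nat.lt_or_ge c 1 with h0 | h1
      · -- c = 0 : adjacent along the path
        have hcol : u.1 = v.1 := cdist_eq_zero _ _ (by omega)
        have hadj : (cylinder 6 n).Adj u v := adj_iff.mpr (Or.inr ⟨hpath, hcol⟩)
        exact hkey v ⟨Or.inl hadj, Or.inr rfl⟩
      · -- c = 1 : bend vertex
        have hc1 : c = 1 := by omega
        refine hkey (v.1, u.2) ⟨Or.inl ?_, Or.inl ?_⟩
        · exact adj_iff.mpr (Or.inl ⟨cdist_one _ _ hc1, rfl⟩)
        · refine adj_iff.mpr (Or.inr ⟨?_, rfl⟩)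
          dsimp only
          omega
    · -- p = 2, c = 0
      have hc0 : c = 0 := by omega
      have hcol : u.1 = v.1 := cdist_eq_zero _ _ hc0
      have hdd : u.2.val + 2 = v.2.val ∨ v.2.val + 2 = u.2.val := by
        have : p = 2 := by omega
        rw [hp] at this; simp [Nat.dist] at this; omega
      have hmlt : min u.2.val v.2.val + 1 < n := by
        have := u.2.isLt; have := v.2.isLt; omega
      refine hkey (u.1, ⟨min u.2.val v.2.val + 1, hmlt⟩) ⟨Or.inl ?_, Or.inl ?_⟩
      · refine adj_iff.mpr (Or.inr ⟨?_, rfl⟩)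
        dsimp only
        omega
      · refine adj_iff.mpr (Or.inr ⟨?_, hcol.symm⟩)
        dsimp only
        omega

/-- Upper bound: any packing of `C₆ □ Pₙ` has at most `2⌈n/2⌉` vertices. -/
lemma packing_card_le {n : ℕ} {D : Finset (Fin 6 × Fin n)}
    (hD : IsPacking (cylinder 6 n) D) : D.card ≤ 2 * ((n + 1) / 2) := by
  set b : ℕ → ℕ := fun j => (D.filter fun v => v.2.val = j).card with hbdef
  have key3 : ∀ x ∈ D, ∀ y ∈ D, ∀ z ∈ D, x ≠ y → x ≠ z → y ≠ z → x.2 = y.2 →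
      Nat.dist x.2.val z.2.val ≤ 1 → False := by
    intro x hx y hy z hz hxy hxz hyz hcol hdist
    have d1 := packing_dist hD hx hy hxy
    have d2 := packing_dist hD hx hz hxz
    have d3 := packing_dist hD hy hz hyz
    unfold vdist at d1 d2 d3
    have e0 : Nat.dist x.2.val y.2.val = 0 := by rw [hcol]; exact Nat.dist_self _
    have e1 : Nat.dist y.2.val z.2.val = Nat.dist x.2.val z.2.val := by rw [hcol]
    exact cdist_three x.1 y.1 z.1 (by omega) (by omega) (by omega)
  have hb : ∀ j, b j + b (j + 1) ≤ 2 := by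
    intro j
    by_contra h
    push_neg at h
    have hcard : 2 < (D.filter fun v => v.2.val = j ∨ v.2.val = j + 1).card := by
      rw [Finset.filter_or, Finset.card_union_of_disjoint]
      · exact h
      · rw [Finset.disjoint_left]
        rintro a ha hb'
        simp only [Finset.mem_filter] at ha hb'
        omega
    obtain ⟨x, y, z, hx, hy, hz, hxy, hxz, hyz⟩ := Finset.two_lt_card_iff.mp hcard
    simp only [Finset.mem_filter] at hx hy hz
    have hdxy : Nat.dist x.2.val y.2.val ≤ 1 := by
      rcases hx.2 with h1 | h1 <;> rcases hy.2 with h2 | h2 <;> simp [Nat.dist] <;> omega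
    have hdxz : Nat.dist x.2.val z.2.val ≤ 1 := by
      rcases hx.2 with h1 | h1 <;> rcases hz.2 with h2 | h2 <;> simp [Nat.dist] <;> omega
    have hdyz : Nat.dist y.2.val z.2.val ≤ 1 := by
      rcases hy.2 with h1 | h1 <;> rcases hz.2 with h2 | h2 <;> simp [Nat.dist] <;> omega
    have hpig : x.2.val = y.2.val ∨ x.2.val = z.2.val ∨ y.2.val = z.2.val := by
      rcases hx.2 with h1 | h1 <;> rcases hy.2 with h2 | h2 <;> rcases hz.2 with h3 | h3 <;> omega
    rcases hpig with hcol | hcol | hcol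
    · exact key3 x hx.1 y hy.1 z hz.1 hxy hxz hyz (Fin.ext hcol) hdxz
    · exact key3 x hx.1 z hz.1 y hy.1 hxz hxy (Ne.symm hyz) (Fin.ext hcol) hdxy
    · exact key3 y hy.1 z hz.1 x hx.1 hyz (Ne.symm hxy) (Ne.symm hxz) (Fin.ext hcol)
        (Nat.dist_comm x.2.val y.2.val ▸ hdxy)
  have hsum : D.card = ∑ j ∈ Finset.range n, b j :=
    Finset.card_eq_sum_card_fiberwise (fun v _ => Finset.mem_range.mpr v.2.isLt)
  have hmono : ∑ j ∈ Finset.range n, b j ≤ ∑ j ∈ Finset.range (2 * ((n + 1) / 2)), b j :=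
    Finset.sum_le_sum_of_subset (Finset.range_subset_range.mpr (by omega))
  have hind : ∀ m, ∑ j ∈ Finset.range (2 * m), b j ≤ 2 * m := by
    intro m
    induction m with
    | zero => simp
    | succ k ih =>
      rw [show 2 * (k + 1) = (2 * k + 1) + 1 by ring, Finset.sum_range_succ,
        Finset.sum_range_succ]
      have := hb (2 * k)
      omega
  calc D.card = ∑ j ∈ Finset.range n, b j := hsum
    _ ≤ ∑ j ∈ Finset.range (2 * ((n + 1) / 2)), b j := hmono
    _ ≤ 2 * ((n + 1) / 2) := hind _

theorem stmt9 (n : ℕ) (hn : 1 ≤ n) :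
    packingNumber (cylinder 6 n) = (if n % 2 = 0 then n else n + 1) := by
  set t := (n + 1) / 2 with ht
  have htarget : (if n % 2 = 0 then n else n + 1) = 2 * t := by
    rcases Nat.even_or_odd n with ⟨k, hk⟩ | ⟨k, hk⟩
    · rw [if_pos (by omega)]; omega
    · rw [if_neg (by omega)]; omega
  -- explicit packing
  have hcoord : ∀ p : Fin t × Fin 2, (if p.1.val % 2 = 0 then 0 else 1) + 3 * p.2.val < 6 := by
    intro p; have := p.2.isLt; split <;> omega
  have hcol : ∀ p : Fin t × Fin 2, 2 * p.1.val < n := by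
    intro p; have := p.1.isLt; omega
  set f : Fin t × Fin 2 → Fin 6 × Fin n :=
    fun p => (⟨(if p.1.val % 2 = 0 then 0 else 1) + 3 * p.2.val, hcoord p⟩,
      ⟨2 * p.1.val, hcol p⟩) with hf
  have hinj : Function.Injective f := by
    rintro ⟨a, s⟩ ⟨b, r⟩ h
    simp only [hf, Prod.mk.injEq, Fin.mk.injEq] at h
    have hs := s.isLt; have hr := r.isLt
    have hab : a.val = b.val := by omega
    have : s.val = r.val := by
      rcases h with ⟨h1, h2⟩
      rw [hab] at h1
      split at h1 <;> omega
    exact Prod.ext (Fin.ext hab) (Fin.ext this)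
  set D : Finset (Fin 6 × Fin n) := Finset.image f Finset.univ with hD
  have hcardD : D.card = 2 * t := by
    rw [hD, Finset.card_image_of_injective _ hinj, Finset.card_univ]
    simp [Fintype.card_prod, mul_comm]
  have hpack : IsPacking (cylinder 6 n) D := by
    intro u hu v hv huv w
    apply no_common_of_dist
    rw [hD] at hu hv
    obtain ⟨p, -, rfl⟩ := Finset.mem_image.mp hu
    obtain ⟨q, -, rfl⟩ := Finset.mem_image.mp hv
    have hne : ¬(p.1.val = q.1.val ∧ p.2.val = q.2.val) := by
      rintro ⟨h1, h2⟩
      exact huv (congrArg f (Prod.ext (Fin.ext h1) (Fin.ext h2)))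
    have h1 := p.1.isLt; have h2 := p.2.isLt; have h3 := q.1.isLt; have h4 := q.2.isLt
    unfold vdist
    simp only [hf, cdist, Nat.dist]
    split <;> split <;> omega
  -- compute the supremum
  rw [packingNumber, htarget]
  apply IsGreatest.csSup_eq
  constructor
  · exact ⟨D, hpack, hcardD.symm⟩
  · rintro c ⟨D', hD', rfl⟩
    exact packing_card_le hD'
end

section
/- For all integers k ≥ 1 and n ≥ 2, γ_{[k]R}(C_7 □ P_n) ≤ (n+1)(k+1) + ((n−1)/2)(k+1) + 2k if n is odd, and γ_{[k]R}(C_7 □ P_n) ≤ n(k+1) + (n/2)(k+1) + 2k + 1 if n is even. -/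
open scoped Classical

/-! ### An explicit labelling of `C_7 □ P_n` -/

/-- The label placed at column `j`, row `i` (as naturals) of `C_7 □ P_n`.
In even columns `j = 2t` the rows `i` with `(i + t) % 7 ∈ {0, 2}` get `k+1`;
in odd columns `j = 2t+1` the row with `(i + t) % 7 = 4` gets `k+1`.
In addition, in the first column the row with residue `5` gets `k`; in the
last column, the row with residue `4` gets `k` if that column is even, and
the row with residue `0` gets `k+1` if that column is odd. -/
def Fval (k n j i : ℕ) : ℕ :=
  (if j % 2 = 0 then (if (i + j/2) % 7 = 0 ∨ (i + j/2) % 7 = 2 then k+1 else 0)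
   else (if (i + j/2) % 7 = 4 then k+1 else 0)) +
  (if j = 0 ∧ (i + j/2) % 7 = 5 then k
   else if j = n-1 ∧ j % 2 = 0 ∧ (i + j/2) % 7 = 4 then k
   else if j = n-1 ∧ j % 2 = 1 ∧ (i + j/2) % 7 = 0 then k+1
   else 0)

lemma Fval_cases (k n j i : ℕ) : Fval k n j i = 0 ∨ Fval k n j i = k ∨ Fval k n j i = k+1 := by
  unfold Fval; split_ifs <;> omega

lemma Fval_give (k n j i : ℕ)
    (h : (j % 2 = 0 ∧ ((i + j/2) % 7 = 0 ∨ (i + j/2) % 7 = 2)) ∨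
         (j % 2 = 1 ∧ ((i + j/2) % 7 = 4 ∨ (j = n-1 ∧ (i + j/2) % 7 = 0)))) :
    Fval k n j i = k+1 := by
  unfold Fval; split_ifs <;> omega

lemma Fval_zero (k n j i : ℕ) (hk : 1 ≤ k) (h : Fval k n j i = 0) :
    (j % 2 = 0 → ¬((i + j/2) % 7 = 0 ∨ (i + j/2) % 7 = 2) ∧ (j = 0 → (i + j/2) % 7 ≠ 5)
      ∧ (j = n-1 → (i + j/2) % 7 ≠ 4)) ∧
    (j % 2 = 1 → (i + j/2) % 7 ≠ 4 ∧ (j = n-1 → (i + j/2) % 7 ≠ 0)) := by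
  unfold Fval at h; split_ifs at h <;> omega

lemma cyc_succ : ∀ x : Fin 7, (SimpleGraph.cycleGraph 7).Adj x (x+1) := by
  simp only [SimpleGraph.cycleGraph_adj']; decide
lemma cyc_pred : ∀ x : Fin 7, (SimpleGraph.cycleGraph 7).Adj x (x-1) := by
  simp only [SimpleGraph.cycleGraph_adj']; decide
lemma val_succ : ∀ x : Fin 7, ((x+1:Fin 7):ℕ) = ((x:ℕ)+1)%7 := by decide
lemma val_pred : ∀ x : Fin 7, ((x-1:Fin 7):ℕ) = ((x:ℕ)+6)%7 := by decide

/-- Every vertex where the labelling vanishes has a neighbour labelled `k+1`. -/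
lemma dominate (k n : ℕ) (hk : 1 ≤ k) (hn : 2 ≤ n) (p : Fin 7 × Fin n)
    (h0 : Fval k n (p.2:ℕ) (p.1:ℕ) = 0) :
    ∃ q, (cylinder 7 n).Adj p q ∧ Fval k n (q.2:ℕ) (q.1:ℕ) = k+1 := by
  obtain ⟨i, j⟩ := p
  simp only at h0 ⊢
  have hz := Fval_zero k n _ _ hk h0
  have hiv : (i:ℕ) < 7 := i.isLt
  have hjv : (j:ℕ) < n := j.isLt
  have hvert : ∀ i' : Fin 7, (SimpleGraph.cycleGraph 7).Adj i i' →
      Fval k n (j:ℕ) (i':ℕ) = k+1 →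
      ∃ q, (cylinder 7 n).Adj (i,j) q ∧ Fval k n (q.2:ℕ) (q.1:ℕ) = k+1 := by
    intro i' ha hf
    exact ⟨(i', j), Or.inl ⟨ha, rfl⟩, hf⟩
  have hhor : ∀ b : ℕ, (b = (j:ℕ)+1 ∨ (j:ℕ) = b+1) → (hb : b < n) →
      Fval k n b (i:ℕ) = k+1 →
      ∃ q, (cylinder 7 n).Adj (i,j) q ∧ Fval k n (q.2:ℕ) (q.1:ℕ) = k+1 := by
    intro b hb hbn hf
    refine ⟨(i, ⟨b, hbn⟩), Or.inr ⟨?_, rfl⟩, hf⟩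
    rw [SimpleGraph.pathGraph_adj]; simp only []; omega
  set a := (i:ℕ) with ha
  set b := (j:ℕ) with hbj
  set r := (a + b/2) % 7 with hr
  have hr7 : r < 7 := Nat.mod_lt _ (by omega)
  rcases Nat.even_or_odd b with hpar | hpar
  · -- b even
    have hb2 : b % 2 = 0 := Nat.even_iff.mp hpar
    obtain ⟨h1, h2, h3⟩ := hz.1 hb2
    have : r = 1 ∨ r = 3 ∨ r = 4 ∨ r = 5 ∨ r = 6 := by omega
    rcases this with h | h | h | h | h
    · exact hvert (i-1) (cyc_pred i) (Fval_give _ _ _ _ (by rw [val_pred]; omega))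
    · exact hvert (i-1) (cyc_pred i) (Fval_give _ _ _ _ (by rw [val_pred]; omega))
    · -- r = 4 : right neighbour, and b ≠ n-1
      have hbn : b ≠ n-1 := fun hc => h3 hc h
      exact hhor (b+1) (Or.inl rfl) (by omega) (Fval_give _ _ _ _ (by
        right; constructor; omega
        left; have : (b+1)/2 = b/2 := by omega
        rw [this]; omega))
    · -- r = 5 : left neighbour, and b ≠ 0
      have hb0 : b ≠ 0 := fun hc => h2 hc h
      exact hhor (b-1) (Or.inr (by omega)) (by omega) (Fval_give _ _ _ _ (by
        right; constructor; omega
        left; have : (b-1)/2 = b/2 - 1 := by omega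
        rw [this]; omega))
    · exact hvert (i+1) (cyc_succ i) (Fval_give _ _ _ _ (by rw [val_succ]; omega))
  · -- b odd
    have hb2 : b % 2 = 1 := Nat.odd_iff.mp hpar
    obtain ⟨h1, h2⟩ := hz.2 hb2
    have : r = 0 ∨ r = 1 ∨ r = 2 ∨ r = 3 ∨ r = 5 ∨ r = 6 := by omega
    rcases this with h | h | h | h | h | h
    · exact hhor (b-1) (Or.inr (by omega)) (by omega) (Fval_give _ _ _ _ (by
        left; constructor; omega
        have : (b-1)/2 = b/2 := by omega
        rw [this]; omega))
    · by_cases hbl : b = n-1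
      · exact hvert (i-1) (cyc_pred i) (Fval_give _ _ _ _ (by
          right; refine ⟨hb2, Or.inr ⟨hbl, ?_⟩⟩; rw [val_pred]; omega))
      · exact hhor (b+1) (Or.inl rfl) (by omega) (Fval_give _ _ _ _ (by
          left; constructor; omega
          have : (b+1)/2 = b/2 + 1 := by omega
          rw [this]; omega))
    · exact hhor (b-1) (Or.inr (by omega)) (by omega) (Fval_give _ _ _ _ (by
        left; constructor; omega
        have : (b-1)/2 = b/2 := by omega
        rw [this]; omega))
    · exact hvert (i+1) (cyc_succ i) (Fval_give _ _ _ _ (by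
        right; exact ⟨hb2, Or.inl (by rw [val_succ]; omega)⟩))
    · exact hvert (i-1) (cyc_pred i) (Fval_give _ _ _ _ (by
        right; exact ⟨hb2, Or.inl (by rw [val_pred]; omega)⟩))
    · by_cases hbl : b = n-1
      · exact hvert (i+1) (cyc_succ i) (Fval_give _ _ _ _ (by
          right; refine ⟨hb2, Or.inr ⟨hbl, ?_⟩⟩; rw [val_succ]; omega))
      · exact hhor (b+1) (Or.inl rfl) (by omega) (Fval_give _ _ _ _ (by
          left; constructor; omega
          have : (b+1)/2 = b/2 + 1 := by omega
          rw [this]; omega))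

/-- If every positive label is at least `k` and `v` has a neighbour labelled
`k+1`, then the `[k]`-Roman condition holds at `v`. -/
lemma key {V : Type*} [Fintype V] (G : SimpleGraph V) (f : V → ℕ) (k : ℕ) (hk : 1 ≤ k)
    (hval : ∀ u, 0 < f u → k ≤ f u) (v u0 : V) (hadj : G.Adj v u0) (hu0 : f u0 = k + 1) :
    k + anCard G f v ≤ nbhdSum G f v := by
  unfold nbhdSum anCard
  set A := Finset.univ.filter (fun u => G.Adj v u ∧ 0 < f u) with hA
  have hsub : A ⊆ Finset.univ.filter (fun u => G.Adj v u ∨ u = v) := by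
    intro u hu
    simp only [hA, Finset.mem_filter, Finset.mem_univ, true_and] at hu ⊢
    exact Or.inl hu.1
  have h1 : ∑ u ∈ A, f u ≤ ∑ u ∈ Finset.univ.filter (fun u => G.Adj v u ∨ u = v), f u :=
    Finset.sum_le_sum_of_subset hsub
  have hu0A : u0 ∈ A := by
    simp only [hA, Finset.mem_filter, Finset.mem_univ, true_and]
    exact ⟨hadj, by omega⟩
  have h2 : ∑ u ∈ A, f u = f u0 + ∑ u ∈ A.erase u0, f u := (Finset.add_sum_erase _ _ hu0A).symm
  have h3 : (A.erase u0).card • k ≤ ∑ u ∈ A.erase u0, f u := by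
    apply Finset.card_nsmul_le_sum
    intro u hu
    have := (Finset.mem_of_mem_erase hu)
    simp only [hA, Finset.mem_filter, Finset.mem_univ, true_and] at this
    exact hval u this.2
  have hcard : (A.erase u0).card = A.card - 1 := Finset.card_erase_of_mem hu0A
  have hApos : 1 ≤ A.card := Finset.card_pos.mpr ⟨u0, hu0A⟩
  rw [smul_eq_mul, hcard] at h3
  have hmul : A.card - 1 ≤ (A.card - 1) * k := Nat.le_mul_of_pos_right _ (by omega)
  omega

/-! ### Summing the labels -/

lemma sum7 (c : ℕ) (h : ℕ → ℕ) : ∑ i : Fin 7, h (((i:ℕ) + c) % 7) = ∑ i : Fin 7, h (i:ℕ) := by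
  apply Fintype.sum_bijective (fun i : Fin 7 => (⟨((i:ℕ)+c)%7, by omega⟩ : Fin 7))
  · exact Finite.injective_iff_bijective.mp (fun x y hxy => by
      simp only [Fin.mk.injEq] at hxy; exact Fin.ext (by omega))
  · intro x; rfl

lemma sum7' (c : ℕ) (h : ℕ → ℕ) :
    ∑ i ∈ Finset.range 7, h ((i + c) % 7) = ∑ i ∈ Finset.range 7, h i := by
  rw [← Fin.sum_univ_eq_sum_range (fun i => h ((i + c) % 7)) 7,
    ← Fin.sum_univ_eq_sum_range h 7]
  exact sum7 c h

lemma colsum (k n b : ℕ) :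
    ∑ i ∈ Finset.range 7, Fval k n b i =
      (if b % 2 = 0 then 2*k+2 else k+1) + (if b = 0 then k else 0) +
      (if b = n-1 then (if b % 2 = 0 then k else k+1) else 0) := by
  rw [show ∑ i ∈ Finset.range 7, Fval k n b i = ∑ i ∈ Finset.range 7, (fun r =>
      (if b % 2 = 0 then (if r = 0 ∨ r = 2 then k+1 else 0) else (if r = 4 then k+1 else 0)) +
      (if b = 0 ∧ r = 5 then k
       else if b = n-1 ∧ b % 2 = 0 ∧ r = 4 then k
       else if b = n-1 ∧ b % 2 = 1 ∧ r = 0 then k+1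
       else 0)) ((i + b/2) % 7) from rfl, sum7' (b/2) (fun r =>
      (if b % 2 = 0 then (if r = 0 ∨ r = 2 then k+1 else 0) else (if r = 4 then k+1 else 0)) +
      (if b = 0 ∧ r = 5 then k
       else if b = n-1 ∧ b % 2 = 0 ∧ r = 4 then k
       else if b = n-1 ∧ b % 2 = 1 ∧ r = 0 then k+1
       else 0))]
  simp only [Finset.sum_range_succ, Finset.sum_range_zero]
  norm_num
  split_ifs <;> omega

lemma psum (a c : ℕ) : ∀ n, ∑ j ∈ Finset.range n, (if j % 2 = 0 then a else c)
    = ((n+1)/2)*a + (n/2)*c := by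
  intro n
  induction n with
  | zero => simp
  | succ m ih =>
    rw [Finset.sum_range_succ, ih]
    rcases Nat.even_or_odd m with hm | hm
    · have h2 : m % 2 = 0 := Nat.even_iff.mp hm
      have e1 : (m+1+1)/2 = (m+1)/2 + 1 := by omega
      have e2 : (m+1)/2 = m/2 := by omega
      rw [if_pos h2, e1, e2]
      ring
    · have h2 : m % 2 = 1 := Nat.odd_iff.mp hm
      have e1 : (m+1+1)/2 = (m+1)/2 := by omega
      have e2 : (m+1)/2 = m/2 + 1 := by omega
      rw [if_neg (by omega), e1, e2]
      ring

lemma total (k n : ℕ) (hn : 2 ≤ n) :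
    ∑ p : Fin 7 × Fin n, Fval k n (p.2:ℕ) (p.1:ℕ) =
      ((n+1)/2) * (2*k+2) + (n/2) * (k+1) + k + (if (n-1) % 2 = 0 then k else k+1) := by
  rw [Fintype.sum_prod_type, Finset.sum_comm]
  have h1 : ∀ j : Fin n, ∑ i : Fin 7, Fval k n (j:ℕ) (i:ℕ) =
      (if (j:ℕ) % 2 = 0 then 2*k+2 else k+1) + (if (j:ℕ) = 0 then k else 0) +
      (if (j:ℕ) = n-1 then (if (j:ℕ) % 2 = 0 then k else k+1) else 0) := by
    intro j
    rw [Fin.sum_univ_eq_sum_range (fun i => Fval k n (j:ℕ) i) 7]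
    exact colsum k n (j:ℕ)
  rw [Finset.sum_congr rfl (fun j _ => h1 j)]
  rw [Fin.sum_univ_eq_sum_range (fun b => (if b % 2 = 0 then 2*k+2 else k+1) +
      (if b = 0 then k else 0) + (if b = n-1 then (if b % 2 = 0 then k else k+1) else 0)) n]
  rw [Finset.sum_add_distrib, Finset.sum_add_distrib, psum]
  rw [Finset.sum_ite_eq' (Finset.range n) 0 (fun _ => k),
      Finset.sum_ite_eq' (Finset.range n) (n-1) (fun b => if b % 2 = 0 then k else k+1)]
  rw [if_pos (Finset.mem_range.mpr (by omega)), if_pos (Finset.mem_range.mpr (by omega))]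

/-- The labelling is a `[k]`-Roman dominating function. -/
lemma Fval_isKRDF (k n : ℕ) (hk : 1 ≤ k) (hn : 2 ≤ n) :
    IsKRDF k (cylinder 7 n) (fun p : Fin 7 × Fin n => Fval k n (p.2:ℕ) (p.1:ℕ)) := by
  constructor
  · intro v
    show Fval k n (v.2:ℕ) (v.1:ℕ) ≤ k + 1
    rcases Fval_cases k n (v.2:ℕ) (v.1:ℕ) with h | h | h <;> omega
  · intro v hv
    replace hv : Fval k n (v.2:ℕ) (v.1:ℕ) < k := hv
    have h0 : Fval k n (v.2:ℕ) (v.1:ℕ) = 0 := by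
      rcases Fval_cases k n (v.2:ℕ) (v.1:ℕ) with h | h | h <;> omega
    obtain ⟨q, hq, hq1⟩ := dominate k n hk hn v h0
    exact key (cylinder 7 n) _ k hk
      (fun u hu => by
        replace hu : 0 < Fval k n (u.2:ℕ) (u.1:ℕ) := hu
        show k ≤ Fval k n (u.2:ℕ) (u.1:ℕ)
        rcases Fval_cases k n (u.2:ℕ) (u.1:ℕ) with h | h | h <;> omega)
      v q hq hq1

theorem stmt12 (k n : ℕ) (hk : 1 ≤ k) (hn : 2 ≤ n) :
    (Odd n → gammaKR k (cylinder 7 n) ≤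
      (n + 1) * (k + 1) + ((n - 1) / 2) * (k + 1) + 2 * k) ∧
    (Even n → gammaKR k (cylinder 7 n) ≤
      n * (k + 1) + (n / 2) * (k + 1) + 2 * k + 1) := by
  have hle : gammaKR k (cylinder 7 n) ≤
      ∑ p : Fin 7 × Fin n, Fval k n (p.2:ℕ) (p.1:ℕ) :=
    Nat.sInf_le ⟨_, Fval_isKRDF k n hk hn, rfl⟩
  rw [total k n hn] at hle
  constructor
  · intro hodd
    have h2 : n % 2 = 1 := Nat.odd_iff.mp hodd
    have e1 : (n+1)/2 * (2*k+2) = (n+1)*(k+1) := by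
      have h : (n+1)/2 * 2 = n+1 := by omega
      calc (n+1)/2 * (2*k+2) = ((n+1)/2 * 2)*(k+1) := by ring
        _ = (n+1)*(k+1) := by rw [h]
    have e2 : n/2 = (n-1)/2 := by omega
    rw [e1, e2, if_pos (by omega : (n-1) % 2 = 0)] at hle
    omega
  · intro heven
    have h2 : n % 2 = 0 := Nat.even_iff.mp heven
    have e1 : (n+1)/2 = n/2 := by omega
    have e2 : n/2 * (2*k+2) = n*(k+1) := by
      have h : n/2 * 2 = n := by omega
      calc n/2 * (2*k+2) = (n/2 * 2)*(k+1) := by ring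
        _ = n*(k+1) := by rw [h]
    rw [e1, e2, if_neg (by omega : ¬ (n-1) % 2 = 0)] at hle
    omega
end
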